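/- For every set F of forbidden words (F ⊆ A^{Z⁻} ∪ ⋃_{k≥1} A^k), the set X_F is a two-sided shift space; conversely, every two-sided shift space Λ ⊆ Σ_A^Z equals X_F for some such F. -/

import Mathlib

open Set Topology Filter TopologicalSpace

universe u

/-- The two-sided full shift over `A`: sequences over `A ∪ {ø}` (with `ø = none`)
in which the empty letter propagates to the right. -/
def SigmaZ (A : Type u) : Type u :=
  {x : ℤ → Option A // ∀ i, x i = none → x (i + 1) = none}

namespace SigmaZ

variable {A : Type u}

/-- The generalized cylinder `Z(x, F)`, where the finite nonempty sequence `x` is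
encoded by its length `k` and its letters `w i` for `i ≤ k`. -/
def cyl (k : ℤ) (w : ℤ → A) (F : Finset A) : Set (SigmaZ A) :=
  {y | (∀ i ≤ k, y.1 i = some (w i)) ∧ ∀ a ∈ F, y.1 (k + 1) ≠ some a}

/-- Generalized cylinders together with complements of finite unions of cylinders `Z(x)`. -/
def basicSets (A : Type u) : Set (Set (SigmaZ A)) :=
  {s | (∃ (k : ℤ) (w : ℤ → A) (F : Finset A), s = cyl k w F) ∨
    ∃ (n : ℕ) (ks : Fin n → ℤ) (ws : Fin n → ℤ → A),
      s = (⋃ j, cyl (ks j) (ws j) ∅)ᶜ}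

instance : TopologicalSpace (SigmaZ A) :=
  TopologicalSpace.generateFrom (basicSets A)

/-- The empty sequence `Ø`. -/
def emptySeq (A : Type u) : SigmaZ A := ⟨fun _ => none, fun _ _ => rfl⟩

/-- The shift map. -/
def shift (x : SigmaZ A) : SigmaZ A :=
  ⟨fun i => x.1 (i + 1), fun i h => x.2 (i + 1) h⟩

end SigmaZ

namespace SigmaZ

variable {A : Type u}

/-- A two-sided shift space: a closed, shift-invariant subset in which the
infinite sequences (those with no empty letter) are dense. -/
def IsShiftSpace (Lam : Set (SigmaZ A)) : Prop :=
  IsClosed Lam ∧ shift '' Lam = Lam ∧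
    Lam ⊆ closure {x ∈ Lam | ∀ i, x.1 i ≠ none}

end SigmaZ

namespace SigmaZ

variable {A : Type u}

/-- The finite word `w` (nonempty) occurs as a subblock of `x`. -/
def OccursWord (w : List A) (x : SigmaZ A) : Prop :=
  ∃ k : ℤ, ∀ n : ℕ, n < w.length → x.1 (k + n) = w[n]?

/-- The left-infinite word `(a_i)_{i ≤ 0}`, encoded by `u : ℕ → A` with `u n = a_{-n}`,
occurs as a left-infinite subword of `x`. -/
def OccursLinf (u : ℕ → A) (x : SigmaZ A) : Prop :=
  ∃ k : ℤ, ∀ n : ℕ, x.1 (k - n) = some (u n)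

/-- The infinite sequences avoiding all forbidden finite words (in `Fw`) and all
forbidden left-infinite words (in `Fl`). -/
def XFinf (Fw : Set (List A)) (Fl : Set (ℕ → A)) : Set (SigmaZ A) :=
  {x | (∀ i, x.1 i ≠ none) ∧ (∀ w ∈ Fw, ¬ OccursWord w x) ∧ ∀ u ∈ Fl, ¬ OccursLinf u x}

/-- The set of letters `a` such that the left-infinite word `x·a` (where `x` has
length `l`) occurs as a left-infinite subword of some element of `Y`. -/
def followerLetters (Y : Set (SigmaZ A)) (x : SigmaZ A) (l : ℤ) : Set A :=
  {a | ∃ y ∈ Y, ∃ m : ℤ, y.1 m = some a ∧ ∀ i < (0 : ℤ), y.1 (m + i) = x.1 (l + 1 + i)}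

open Classical in
/-- The shift space `X_F` determined by the forbidden words `F = Fw ∪ Fl`. -/
def XF (Fw : Set (List A)) (Fl : Set (ℕ → A)) : Set (SigmaZ A) :=
  XFinf Fw Fl ∪
    (if (XFinf Fw Fl).Infinite then
      {emptySeq A} ∪ {x | ∃ l : ℤ, x.1 l ≠ none ∧ x.1 (l + 1) = none ∧
        (followerLetters (XFinf Fw Fl) x l).Infinite}
    else ∅)

end SigmaZ

namespace SigmaZ

variable {A : Type u}

/-! ### Basic lemmas -/

/-- Shift by an arbitrary integer amount. -/
def shiftBy (d : ℤ) (x : SigmaZ A) : SigmaZ A :=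
  ⟨fun i => x.1 (i + d), fun i h => by
    have := x.2 (i + d) h
    simpa [show i + d + 1 = i + 1 + d by ring] using this⟩

@[simp] lemma shiftBy_apply (d : ℤ) (x : SigmaZ A) (i : ℤ) :
    (shiftBy d x).1 i = x.1 (i + d) := rfl

lemma shift_eq_shiftBy (x : SigmaZ A) : shift x = shiftBy 1 x := Subtype.ext rfl

lemma shiftBy_shiftBy (d e : ℤ) (x : SigmaZ A) :
    shiftBy d (shiftBy e x) = shiftBy (d + e) x := by
  apply Subtype.ext; funext i; simp [add_assoc]

@[simp] lemma shiftBy_zero (x : SigmaZ A) : shiftBy 0 x = x := by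
  apply Subtype.ext; funext i; simp

lemma shift_shiftBy_neg_one (x : SigmaZ A) : shift (shiftBy (-1) x) = x := by
  apply Subtype.ext; funext i
  show x.1 (i + 1 + -1) = x.1 i
  norm_num

lemma shiftBy_mem (Lam : Set (SigmaZ A)) (h : shift '' Lam = Lam) :
    ∀ d : ℤ, ∀ x ∈ Lam, shiftBy d x ∈ Lam := by
  have h1 : ∀ x ∈ Lam, shift x ∈ Lam := by
    intro x hx
    rw [← h]; exact ⟨x, hx, rfl⟩
  have h2 : ∀ x ∈ Lam, shiftBy (-1) x ∈ Lam := by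
    intro x hx
    rw [← h] at hx
    obtain ⟨y, hy, rfl⟩ := hx
    have : shiftBy (-1) (shift y) = y := by
      apply Subtype.ext; funext i
      show y.1 (i + -1 + 1) = y.1 i
      norm_num
    rwa [this]
  intro d
  induction d using Int.induction_on with
  | zero => simpa using fun x hx => hx
  | succ k ih =>
      intro x hx
      have : shiftBy (k + 1) x = shift (shiftBy k x) := by
        apply Subtype.ext; funext i
        show x.1 (i + (k + 1)) = x.1 (i + 1 + k)
        ring_nf
      rw [this]; exact h1 _ (ih x hx)
  | pred k ih =>
      intro x hx
      have : shiftBy (-k - 1) x = shiftBy (-1) (shiftBy (-k) x) := by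
        apply Subtype.ext; funext i
        show x.1 (i + (-k - 1)) = x.1 (i + -1 + -k)
        ring_nf
      rw [this]; exact h2 _ (ih x hx)

/-- `none` propagates to the right. -/
lemma none_mono {x : SigmaZ A} {i j : ℤ} (h : x.1 i = none) (hij : i ≤ j) :
    x.1 j = none := by
  exact Int.le_induction h (fun j _ hj => x.2 j hj) j hij

lemma ne_none_of_le {x : SigmaZ A} {i j : ℤ} (h : x.1 j ≠ none) (hij : i ≤ j) :
    x.1 i ≠ none := fun hn => h (none_mono hn hij)

/-- Uniqueness of the position of the last letter. -/
lemma last_unique {x : SigmaZ A} {l l' : ℤ} (h : x.1 l ≠ none) (h2 : x.1 (l + 1) = none)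
    (h' : x.1 l' ≠ none) (h2' : x.1 (l' + 1) = none) : l = l' := by
  by_contra hne
  rcases lt_or_gt_of_ne hne with hlt | hlt
  · exact h' (none_mono h2 (by omega))
  · exact h (none_mono h2' (by omega))

/-- The letters of a sequence. -/
noncomputable def letters [Nonempty A] (x : SigmaZ A) : ℤ → A :=
  fun i => (x.1 i).getD (Classical.arbitrary A)

lemma letters_spec [Nonempty A] {x : SigmaZ A} {i : ℤ} (h : x.1 i ≠ none) :
    x.1 i = some (letters x i) := by
  cases hx : x.1 i with
  | none => exact absurd hx h
  | some a => simp [letters, hx]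

/-- Trichotomy: empty, infinite, or finite with a last letter. -/
lemma trichotomy (x : SigmaZ A) :
    x = emptySeq A ∨ (∀ i, x.1 i ≠ none) ∨ ∃ l, x.1 l ≠ none ∧ x.1 (l + 1) = none := by
  by_cases hall : ∀ i, x.1 i = none
  · left; apply Subtype.ext; funext i; exact hall i
  · push_neg at hall
    obtain ⟨i0, hi0⟩ := hall
    by_cases hinf : ∀ i, x.1 i ≠ none
    · right; left; exact hinf
    · push_neg at hinf
      obtain ⟨j0, hj0⟩ := hinf
      right; right
      have hex : ∃ z : ℤ, i0 ≤ z ∧ x.1 z = none := by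
        refine ⟨j0, ?_, hj0⟩
        by_contra hlt
        exact hi0 (none_mono hj0 (by omega))
      have hbdd : ∃ b, ∀ z : ℤ, (i0 ≤ z ∧ x.1 z = none) → b ≤ z := ⟨i0, fun z hz => hz.1⟩
      obtain ⟨lb, ⟨hlb1, hlb2⟩, hmin⟩ := Int.exists_least_of_bdd hbdd hex
      refine ⟨lb - 1, ?_, by simpa using hlb2⟩
      intro hn
      have : i0 ≤ lb - 1 := by
        have : i0 ≠ lb := fun h => hi0 (h ▸ hlb2)
        omega
      exact absurd (hmin (lb - 1) ⟨this, hn⟩) (by omega)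

end SigmaZ
namespace SigmaZ

variable {A : Type u}

lemma mem_cyl_iff {k : ℤ} {w : ℤ → A} {F : Finset A} {y : SigmaZ A} :
    y ∈ cyl k w F ↔ (∀ i ≤ k, y.1 i = some (w i)) ∧ ∀ a ∈ F, y.1 (k + 1) ≠ some a :=
  Iff.rfl

lemma not_mem_cyl_empty {k : ℤ} {w : ℤ → A} {y : SigmaZ A} :
    y ∉ cyl k w (∅ : Finset A) ↔ ∃ i ≤ k, y.1 i ≠ some (w i) := by
  simp only [mem_cyl_iff, Finset.notMem_empty, false_implies, implies_true, and_true]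
  push_neg
  rfl

lemma univ_mem_basicSets : (univ : Set (SigmaZ A)) ∈ basicSets A := by
  right
  exact ⟨0, Fin.elim0, Fin.elim0, by rw [Set.iUnion_of_empty]; simp⟩

lemma exists_int_bound {n : ℕ} (f : Fin n → ℤ) (c : ℤ) : ∃ K, c ≤ K ∧ ∀ j, f j ≤ K := by
  obtain ⟨M, hM⟩ := Finite.exists_le f
  exact ⟨max c M, le_max_left _ _, fun j => le_trans (hM j) (le_max_right _ _)⟩

lemma le_of_ne_none {x : SigmaZ A} {k l : ℤ} (hk : x.1 k ≠ none) (h2 : x.1 (l + 1) = none) :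
    k ≤ l := by
  by_contra h
  exact hk (none_mono h2 (by omega))

/-- If `x` lies in two cylinders with `k ≤ k'`, the second is contained in the first. -/
lemma cyl_subset_of_le {k k' : ℤ} {w w' : ℤ → A} {F F' : Finset A} {x : SigmaZ A}
    (hlt : k < k') (hx1 : x ∈ cyl k w F) (hx2 : x ∈ cyl k' w' F') :
    cyl k' w' F' ⊆ cyl k w F := by
  intro y hy
  constructor
  · intro i hi
    have h1 : y.1 i = some (w' i) := hy.1 i (le_trans hi (le_of_lt hlt))
    have h2 : x.1 i = some (w' i) := hx2.1 i (le_trans hi (le_of_lt hlt))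
    have h3 : x.1 i = some (w i) := hx1.1 i hi
    rw [h1, ← h2, h3]
  · intro a ha
    have h1 : y.1 (k + 1) = some (w' (k + 1)) := hy.1 (k + 1) (by omega)
    have h2 : x.1 (k + 1) = some (w' (k + 1)) := hx2.1 (k + 1) (by omega)
    rw [h1, ← h2]
    exact hx1.2 a ha

/-- Case: a cylinder meets a complement-type basic set. -/
lemma cyl_inter_compl {k : ℤ} {w : ℤ → A} {F : Finset A} {n : ℕ} {ks : Fin n → ℤ}
    {ws : Fin n → ℤ → A} {x : SigmaZ A} (hx1 : x ∈ cyl k w F)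
    (hx2 : x ∈ (⋃ j, cyl (ks j) (ws j) ∅)ᶜ) :
    ∃ s3 ∈ basicSets A, x ∈ s3 ∧ s3 ⊆ cyl k w F ∩ (⋃ j, cyl (ks j) (ws j) ∅)ᶜ := by
  classical
  have : Nonempty A := ⟨w 0⟩
  have hxnot : ∀ j, ∃ i ≤ ks j, x.1 i ≠ some (ws j i) := by
    intro j
    rw [← not_mem_cyl_empty]
    intro hmem
    exact hx2 (Set.mem_iUnion.2 ⟨j, hmem⟩)
  have hxk : x.1 k ≠ none := by rw [hx1.1 k le_rfl]; simp
  rcases trichotomy x with rfl | hinf | ⟨l, hl, hl1⟩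
  · exact absurd rfl hxk
  · -- infinite case
    obtain ⟨K, hK1, hK2⟩ := exists_int_bound ks (k + 1)
    refine ⟨cyl K (letters x) ∅, Or.inl ⟨K, letters x, ∅, rfl⟩, ?_, ?_⟩
    · exact ⟨fun i _ => letters_spec (hinf i), by simp⟩
    · intro y hy
      have hyx : ∀ i ≤ K, y.1 i = x.1 i := by
        intro i hi
        rw [hy.1 i hi, ← letters_spec (hinf i)]
      constructor
      · constructor
        · intro i hi
          rw [hyx i (by omega)]
          exact hx1.1 i hi
        · intro a ha
          rw [hyx (k + 1) (by omega)]
          exact hx1.2 a ha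
      · intro hmem
        obtain ⟨j, hj⟩ := Set.mem_iUnion.1 hmem
        obtain ⟨i, hi, hne⟩ := hxnot j
        exact hne (by rw [← hyx i (le_trans hi (hK2 j))]; exact hj.1 i hi)
  · -- finite case, last letter at l
    have hkl : k ≤ l := le_of_ne_none hxk hl1
    set F3 : Finset A := F ∪ Finset.image (fun j => ws j (l + 1)) Finset.univ with hF3
    refine ⟨cyl l (letters x) F3, Or.inl ⟨l, letters x, F3, rfl⟩, ?_, ?_⟩
    · refine ⟨fun i hi => letters_spec (ne_none_of_le hl hi), fun a _ => by rw [hl1]; simp⟩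
    · intro y hy
      have hyx : ∀ i ≤ l, y.1 i = x.1 i := by
        intro i hi
        rw [hy.1 i hi, ← letters_spec (ne_none_of_le hl hi)]
      constructor
      · constructor
        · intro i hi
          rw [hyx i (by omega)]
          exact hx1.1 i hi
        · intro a ha
          rcases eq_or_lt_of_le hkl with rfl | hkl'
          · exact hy.2 a (Finset.mem_union_left _ ha)
          · rw [hyx (k + 1) (by omega)]
            exact hx1.2 a ha
      · intro hmem
        obtain ⟨j, hj⟩ := Set.mem_iUnion.1 hmem
        obtain ⟨i, hi, hne⟩ := hxnot j
        rcases le_or_gt i l with hil | hil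
        · exact hne (by rw [← hyx i hil]; exact hj.1 i hi)
        · have hlj : l + 1 ≤ ks j := by omega
          have : ws j (l + 1) ∈ F3 := Finset.mem_union_right _
            (Finset.mem_image.2 ⟨j, Finset.mem_univ j, rfl⟩)
          exact hy.2 _ this (hj.1 (l + 1) hlj)

/-- Directedness of the basic sets. -/
lemma basicSets_directed {s1 s2 : Set (SigmaZ A)} (h1 : s1 ∈ basicSets A)
    (h2 : s2 ∈ basicSets A) {x : SigmaZ A} (hx1 : x ∈ s1) (hx2 : x ∈ s2) :
    ∃ s3 ∈ basicSets A, x ∈ s3 ∧ s3 ⊆ s1 ∩ s2 := by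
  classical
  rcases h1 with ⟨k, w, F, rfl⟩ | ⟨n, ks, ws, rfl⟩
  · rcases h2 with ⟨k', w', F', rfl⟩ | ⟨n, ks, ws, rfl⟩
    · -- two cylinders
      rcases lt_trichotomy k k' with hlt | rfl | hlt
      · exact ⟨cyl k' w' F', Or.inl ⟨k', w', F', rfl⟩, hx2,
          Set.subset_inter (cyl_subset_of_le hlt hx1 hx2) le_rfl⟩
      · refine ⟨cyl k w (F ∪ F'), Or.inl ⟨k, w, F ∪ F', rfl⟩,
          ⟨hx1.1, fun a ha => ?_⟩, ?_⟩
        · rcases Finset.mem_union.1 ha with h | h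
          · exact hx1.2 a h
          · exact hx2.2 a h
        · intro y hy
          constructor
          · exact ⟨hy.1, fun a ha => hy.2 a (Finset.mem_union_left _ ha)⟩
          · refine ⟨fun i hi => ?_, fun a ha => hy.2 a (Finset.mem_union_right _ ha)⟩
            rw [hy.1 i hi]
            have := hx1.1 i hi
            have := hx2.1 i hi
            congr 1
            have e1 : x.1 i = some (w i) := hx1.1 i hi
            have e2 : x.1 i = some (w' i) := hx2.1 i hi
            rw [e1] at e2
            exact Option.some.inj e2
      · exact ⟨cyl k w F, Or.inl ⟨k, w, F, rfl⟩, hx1,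
          Set.subset_inter le_rfl (cyl_subset_of_le hlt hx2 hx1)⟩
    · exact cyl_inter_compl hx1 hx2
  · rcases h2 with ⟨k', w', F', rfl⟩ | ⟨n', ks', ws', rfl⟩
    · obtain ⟨s3, hs3, hxs3, hsub⟩ := cyl_inter_compl hx2 hx1
      exact ⟨s3, hs3, hxs3, fun y hy => ⟨(hsub hy).2, (hsub hy).1⟩⟩
    · -- two complements
      refine ⟨(⋃ j : Fin (n + n'), cyl (Fin.append ks ks' j) (Fin.append ws ws' j) ∅)ᶜ,
        Or.inr ⟨n + n', _, _, rfl⟩, ?_, ?_⟩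
      · intro hmem
        obtain ⟨j, hj⟩ := Set.mem_iUnion.1 hmem
        refine Fin.addCases (fun j0 hj => ?_) (fun j0 hj => ?_) j hj
        · rw [Fin.append_left, Fin.append_left] at hj
          exact hx1 (Set.mem_iUnion.2 ⟨j0, hj⟩)
        · rw [Fin.append_right, Fin.append_right] at hj
          exact hx2 (Set.mem_iUnion.2 ⟨j0, hj⟩)
      · intro y hy
        constructor
        · intro hmem
          obtain ⟨j, hj⟩ := Set.mem_iUnion.1 hmem
          refine hy (Set.mem_iUnion.2 ⟨Fin.castAdd n' j, ?_⟩)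
          rw [Fin.append_left, Fin.append_left]
          exact hj
        · intro hmem
          obtain ⟨j, hj⟩ := Set.mem_iUnion.1 hmem
          refine hy (Set.mem_iUnion.2 ⟨Fin.natAdd n j, ?_⟩)
          rw [Fin.append_right, Fin.append_right]
          exact hj

/-- Characterization of neighborhoods in the generated topology. -/
lemma mem_nhds_iff_basic {x : SigmaZ A} {t : Set (SigmaZ A)} :
    t ∈ 𝓝 x ↔ ∃ s ∈ basicSets A, x ∈ s ∧ s ⊆ t := by
  have hnhds : 𝓝 x = ⨅ s ∈ {s | x ∈ s ∧ s ∈ basicSets A}, 𝓟 s :=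
    TopologicalSpace.nhds_generateFrom
  rw [hnhds]
  rw [Filter.mem_biInf_of_directed]
  · constructor
    · rintro ⟨s, ⟨hxs, hs⟩, hts⟩
      exact ⟨s, hs, hxs, hts⟩
    · rintro ⟨s, hs, hxs, hts⟩
      exact ⟨s, ⟨hxs, hs⟩, hts⟩
  · rintro s ⟨hxs, hs⟩ s' ⟨hxs', hs'⟩
    obtain ⟨s3, hs3, hxs3, hsub⟩ := basicSets_directed hs hs' hxs hxs'
    exact ⟨s3, ⟨hxs3, hs3⟩, Filter.principal_mono.2 (fun y hy => (hsub hy).1),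
      Filter.principal_mono.2 (fun y hy => (hsub hy).2)⟩
  · exact ⟨univ, mem_univ x, univ_mem_basicSets⟩

lemma mem_closure_iff_basic {x : SigmaZ A} {S : Set (SigmaZ A)} :
    x ∈ closure S ↔ ∀ s ∈ basicSets A, x ∈ s → (s ∩ S).Nonempty := by
  rw [mem_closure_iff_nhds]
  constructor
  · intro h s hs hxs
    exact h s (mem_nhds_iff_basic.2 ⟨s, hs, hxs, le_rfl⟩)
  · intro h t ht
    obtain ⟨s, hs, hxs, hst⟩ := mem_nhds_iff_basic.1 ht
    obtain ⟨y, hy1, hy2⟩ := h s hs hxs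
    exact ⟨y, hst hy1, hy2⟩

lemma isClosed_of_basic {S : Set (SigmaZ A)}
    (h : ∀ x ∉ S, ∃ s ∈ basicSets A, x ∈ s ∧ s ∩ S = ∅) : IsClosed S := by
  rw [← isOpen_compl_iff, isOpen_iff_mem_nhds]
  intro x hx
  obtain ⟨s, hs, hxs, hdisj⟩ := h x hx
  refine mem_nhds_iff_basic.2 ⟨s, hs, hxs, fun y hy hyS => ?_⟩
  exact Set.eq_empty_iff_forall_notMem.1 hdisj y ⟨hy, hyS⟩

end SigmaZ
namespace SigmaZ

variable {A : Type u}

lemma nat_infinite_exists_gt {T : Set ℕ} (h : T.Infinite) (m : ℕ) : ∃ t ∈ T, m < t := by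
  by_contra hc
  push_neg at hc
  exact h ((Set.finite_Iic m).subset hc)

/-- An infinite shift-invariant set of sequences is not covered by finitely many
cylinders. -/
lemma not_subset_cylinders (Y : Set (SigmaZ A)) (hinf : Y.Infinite)
    (hYinv : ∀ d : ℤ, ∀ y ∈ Y, shiftBy d y ∈ Y)
    {n : ℕ} (ks : Fin n → ℤ) (ws : Fin n → ℤ → A) :
    ¬ Y ⊆ ⋃ j, cyl (ks j) (ws j) ∅ := by
  intro hsub
  set T : SigmaZ A → Fin n → Set ℕ :=
    fun y j => {t : ℕ | ∀ i ≤ ks j, y.1 (i + t) = some (ws j i)} with hT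
  have claim1 : ∀ y ∈ Y, ∀ t : ℕ, ∃ j, t ∈ T y j := by
    intro y hy t
    have := hsub (hYinv t y hy)
    obtain ⟨j, hj⟩ := Set.mem_iUnion.1 this
    exact ⟨j, fun i hi => hj.1 i hi⟩
  have claim2 : ∀ y ∈ Y, ∃ j, (T y j).Infinite := by
    intro y hy
    by_contra hc
    push_neg at hc
    have : (Set.univ : Set ℕ).Finite := by
      refine Set.Finite.subset (Set.finite_iUnion hc) ?_
      intro t _
      obtain ⟨j, hj⟩ := claim1 y hy t
      exact Set.mem_iUnion.2 ⟨j, hj⟩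
    exact Set.infinite_univ this
  have : ∃ j, {y ∈ Y | (T y j).Infinite}.Infinite := by
    by_contra hc
    push_neg at hc
    refine hinf (Set.Finite.subset (Set.finite_iUnion hc) ?_)
    intro y hy
    obtain ⟨j, hj⟩ := claim2 y hy
    exact Set.mem_iUnion.2 ⟨j, hy, hj⟩
  obtain ⟨j, hSj⟩ := this
  set S := {y ∈ Y | (T y j).Infinite} with hS
  set k := ks j with hk
  set w := ws j with hw
  set P : Set ℕ := {p | 0 < p ∧ ∀ i ≤ k, w i = w (i - (p : ℤ))} with hP
  have L1 : ∀ y ∈ S, ∀ (s : ℤ) (t : ℕ), t ∈ T y j → s - k ≤ t → y.1 s = some (w (s - t)) := by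
    intro y _ s t ht hs
    have := ht (s - t) (by omega)
    rwa [sub_add_cancel] at this
  have L2 : ∀ y ∈ S, ∀ t1 t2 : ℕ, t1 ∈ T y j → t2 ∈ T y j → t1 < t2 → (t2 - t1) ∈ P := by
    intro y hy t1 t2 ht1 ht2 hlt
    refine ⟨by omega, fun i hi => ?_⟩
    have e1 : y.1 (i + t1) = some (w i) := ht1 i hi
    have e2 : y.1 (i + t1) = some (w (i + t1 - t2)) :=
      L1 y hy (i + t1) t2 ht2 (by omega)
    rw [e1] at e2
    have h3 : w i = w (i + t1 - t2) := Option.some.inj e2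
    rwa [show (i + (t1:ℤ) - t2) = i - ((t2 - t1 : ℕ) : ℤ) by
      push_cast [Nat.cast_sub hlt.le]; ring] at h3
  obtain ⟨y0, hy0⟩ := hSj.nonempty
  have hPne : P.Nonempty := by
    obtain ⟨t1, ht1⟩ := hy0.2.nonempty
    obtain ⟨t2, ht2, hlt⟩ := nat_infinite_exists_gt hy0.2 t1
    exact ⟨t2 - t1, L2 y0 hy0 t1 t2 ht1 ht2 hlt⟩
  set p0 := sInf P with hp0def
  have hp0 : p0 ∈ P := Nat.sInf_mem hPne
  have hp0pos : 0 < p0 := hp0.1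
  have L3 : ∀ p ∈ P, ∀ q ∈ P, p < q → (q - p) ∈ P := by
    intro p hp q hq hlt
    refine ⟨by omega, fun i hi => ?_⟩
    have e1 : w i = w (i - (q : ℤ)) := hq.2 i hi
    have e2 : w (i + p - q) = w (i + p - q - p) := hp.2 (i + p - q) (by omega)
    rw [show (i + (p:ℤ) - q - p) = i - q by ring] at e2
    rw [show (i - ((q - p : ℕ) : ℤ)) = i + p - q by push_cast [Nat.cast_sub hlt.le]; ring]
    rw [e1, ← e2]
  have L4 : ∀ p ∈ P, p0 ∣ p := by
    intro p
    induction p using Nat.strong_induction_on with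
    | _ p ih =>
      intro hp
      rcases eq_or_lt_of_le (Nat.sInf_le hp) with h | h
      · exact h ▸ dvd_rfl
      · have hq : p - p0 ∈ P := L3 p0 hp0 p hp h
        have hd := ih (p - p0) (by omega) hq
        have he : p = (p - p0) + p0 := by omega
        rw [he]
        exact dvd_add hd dvd_rfl
  have L5 : ∀ y ∈ S, ∀ t t' : ℕ, t ∈ T y j → t' ∈ T y j → t % p0 = t' % p0 := by
    have key : ∀ y ∈ S, ∀ t t' : ℕ, t ∈ T y j → t' ∈ T y j → t < t' → t % p0 = t' % p0 := by
      intro y hy t t' ht ht' hlt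
      have := L4 _ (L2 y hy t t' ht ht' hlt)
      exact (Nat.modEq_iff_dvd' hlt.le).2 this
    intro y hy t t' ht ht'
    rcases lt_trichotomy t t' with h | rfl | h
    · exact key y hy t t' ht ht' h
    · rfl
    · exact (key y hy t' t ht' ht h).symm
  have L6 : ∀ (c : ℕ) (b : ℤ), b ≤ k → w b = w (b - (c : ℤ) * (p0 : ℤ)) := by
    intro c
    induction c with
    | zero => simp
    | succ c ih =>
      intro b hb
      have e1 := ih b hb
      have hcc : (0:ℤ) ≤ (c : ℤ) * (p0 : ℤ) := by positivity
      have e2 : w (b - (c:ℤ) * (p0:ℤ)) = w (b - (c:ℤ) * (p0:ℤ) - p0) :=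
        hp0.2 (b - (c:ℤ) * (p0:ℤ)) (by linarith)
      rw [e1, e2]
      congr 1
      push_cast
      ring
  have L7 : ∀ a b : ℤ, a ≤ k → b ≤ k → (p0:ℤ) ∣ (b - a) → w a = w b := by
    have key : ∀ a b : ℤ, a ≤ k → b ≤ k → a ≤ b → (p0:ℤ) ∣ (b - a) → w a = w b := by
      intro a b ha hb hab hd
      obtain ⟨c, hc⟩ := hd
      have hc0 : 0 ≤ c := by
        by_contra hneg
        push_neg at hneg
        have : (p0:ℤ) * c < 0 := mul_neg_of_pos_of_neg (by exact_mod_cast hp0pos) hneg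
        linarith
      lift c to ℕ using hc0
      have e1 := L6 c b hb
      rw [e1]
      congr 1
      have : b - a = (c:ℤ) * (p0:ℤ) := by rw [hc]; ring
      linarith
    intro a b ha hb hd
    rcases le_total a b with h | h
    · exact key a b ha hb h hd
    · have hd' : (p0:ℤ) ∣ (a - b) := by
        have := dvd_neg.2 hd
        rwa [neg_sub] at this
      exact (key b a hb ha h hd').symm
  have classes : ∀ (r : ℕ) (y : SigmaZ A), y ∈ S → ∀ y' ∈ S,
      (∃ t ∈ T y j, t % p0 = r) → (∃ t' ∈ T y' j, t' % p0 = r) → y = y' := by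
    rintro r y hy y' hy' ⟨t, ht, htr⟩ ⟨t', ht', htr'⟩
    apply Subtype.ext; funext s
    obtain ⟨t2, ht2, hlt2⟩ := nat_infinite_exists_gt hy.2 (s - k).toNat
    obtain ⟨t2', ht2', hlt2'⟩ := nat_infinite_exists_gt hy'.2 (s - k).toNat
    have hb : s - k ≤ (t2:ℤ) :=
      le_trans (Int.self_le_toNat _) (by exact_mod_cast hlt2.le)
    have hb' : s - k ≤ (t2':ℤ) :=
      le_trans (Int.self_le_toNat _) (by exact_mod_cast hlt2'.le)
    have e1 : y.1 s = some (w (s - t2)) := L1 y hy s t2 ht2 hb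
    have e2 : y'.1 s = some (w (s - t2')) := L1 y' hy' s t2' ht2' hb'
    have hmod : t2 % p0 = t2' % p0 := by
      rw [L5 y hy t2 t ht2 ht, htr, ← htr', L5 y' hy' t' t2' ht' ht2']
    have hdvd : (p0:ℤ) ∣ ((s - t2') - (s - t2)) := by
      have h1 : Nat.ModEq p0 t2' t2 := hmod.symm
      have h2 := h1.dvd
      rwa [show (s - (t2':ℤ)) - (s - t2) = (t2:ℤ) - t2' by ring]
    have : w (s - t2) = w (s - t2') := L7 _ _ (by omega) (by omega) hdvd
    rw [e1, e2, this]
  have hfin : S.Finite := by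
    have hfr : ∀ r : Fin p0, ({y ∈ S | ∃ t ∈ T y j, t % p0 = (r:ℕ)}).Finite := by
      intro r
      apply Set.Subsingleton.finite
      intro y hy y' hy'
      exact classes r y hy.1 y' hy'.1 hy.2 hy'.2
    refine Set.Finite.subset (Set.finite_iUnion hfr) ?_
    intro y hy
    obtain ⟨t, ht⟩ := hy.2.nonempty
    exact Set.mem_iUnion.2 ⟨⟨t % p0, Nat.mod_lt _ hp0pos⟩, hy, t, ht, rfl⟩
  exact hSj hfin

end SigmaZ
namespace SigmaZ

variable {A : Type u}

@[simp] lemma emptySeq_apply (i : ℤ) : (emptySeq A).1 i = none := rfl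

lemma shift_emptySeq : shift (emptySeq A) = emptySeq A := Subtype.ext rfl

/-- Invariance of `XFinf` under all shifts. -/
lemma shiftBy_mem_XFinf {Fw : Set (List A)} {Fl : Set (ℕ → A)} (d : ℤ) {x : SigmaZ A}
    (hx : x ∈ XFinf Fw Fl) : shiftBy d x ∈ XFinf Fw Fl := by
  refine ⟨fun i => hx.1 (i + d), fun v hv hocc => ?_, fun u hu hocc => ?_⟩
  · obtain ⟨kk, hkk⟩ := hocc
    refine hx.2.1 v hv ⟨kk + d, fun n hn => ?_⟩
    have := hkk n hn
    rwa [shiftBy_apply, show kk + (n:ℤ) + d = kk + d + n by ring] at this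
  · obtain ⟨kk, hkk⟩ := hocc
    refine hx.2.2 u hu ⟨kk + d, fun n => ?_⟩
    have := hkk n
    rwa [shiftBy_apply, show kk - (n:ℤ) + d = kk + d - n by ring] at this

lemma followerLetters_congr {Y : Set (SigmaZ A)} {x x' : SigmaZ A} {l l' : ℤ}
    (h : ∀ i : ℤ, i < 0 → x.1 (l + 1 + i) = x'.1 (l' + 1 + i)) :
    followerLetters Y x l = followerLetters Y x' l' := by
  ext a
  constructor
  · rintro ⟨y, hy, m, hm, hmatch⟩
    exact ⟨y, hy, m, hm, fun i hi => by rw [hmatch i hi, h i hi]⟩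
  · rintro ⟨y, hy, m, hm, hmatch⟩
    exact ⟨y, hy, m, hm, fun i hi => by rw [hmatch i hi, ← h i hi]⟩

/-- Given a follower letter `a` of `x`, there is an element of `Y` agreeing with `x`
up to `l` and carrying `a` at position `l + 1`. -/
lemma follower_witness {Y : Set (SigmaZ A)} (hYinv : ∀ d : ℤ, ∀ y ∈ Y, shiftBy d y ∈ Y)
    {x : SigmaZ A} {l : ℤ} {a : A} (ha : a ∈ followerLetters Y x l) :
    ∃ z ∈ Y, (∀ i ≤ l, z.1 i = x.1 i) ∧ z.1 (l + 1) = some a := by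
  obtain ⟨y, hy, m, hm, hmatch⟩ := ha
  refine ⟨shiftBy (m - 1 - l) y, hYinv _ y hy, fun i hi => ?_, ?_⟩
  · rw [shiftBy_apply, show i + (m - 1 - l) = m + (i - 1 - l) by ring,
      hmatch (i - 1 - l) (by omega), show l + 1 + (i - 1 - l) = i by ring]
  · rw [shiftBy_apply, show l + 1 + (m - 1 - l) = m by ring, hm]

/-- Density core: a basic set containing a finite sequence with infinitely many
follower letters meets `Y`. -/
lemma basic_meets_of_followers {Y : Set (SigmaZ A)}
    (hYinv : ∀ d : ℤ, ∀ y ∈ Y, shiftBy d y ∈ Y) {x : SigmaZ A} {l : ℤ}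
    (hl : x.1 l ≠ none) (hl1 : x.1 (l + 1) = none)
    (hfol : (followerLetters Y x l).Infinite)
    {s : Set (SigmaZ A)} (hs : s ∈ basicSets A) (hxs : x ∈ s) :
    (s ∩ Y).Nonempty := by
  classical
  rcases hs with ⟨k, w, F, rfl⟩ | ⟨n, ks, ws, rfl⟩
  · have hxk : x.1 k ≠ none := by rw [hxs.1 k le_rfl]; simp
    have hkl : k ≤ l := le_of_ne_none hxk hl1
    obtain ⟨a, ha, haF⟩ := hfol.exists_notMem_finset F
    obtain ⟨z, hzY, hzmatch, hza⟩ := follower_witness hYinv ha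
    refine ⟨z, ⟨fun i hi => ?_, fun a' ha' => ?_⟩, hzY⟩
    · rw [hzmatch i (le_trans hi hkl)]
      exact hxs.1 i hi
    · rcases eq_or_lt_of_le hkl with rfl | hkl'
      · rw [hza]
        intro hcon
        exact haF (by rwa [← Option.some.inj hcon] at ha')
      · rw [hzmatch (k + 1) (by omega)]
        exact hxs.2 a' ha'
  · obtain ⟨a, ha, haF⟩ := hfol.exists_notMem_finset
      (Finset.image (fun j => ws j (l + 1)) Finset.univ)
    obtain ⟨z, hzY, hzmatch, hza⟩ := follower_witness hYinv ha
    refine ⟨z, fun hmem => ?_, hzY⟩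
    obtain ⟨j, hj⟩ := Set.mem_iUnion.1 hmem
    have hxnot : ∃ i ≤ ks j, x.1 i ≠ some (ws j i) := by
      rw [← not_mem_cyl_empty]
      exact fun hc => hxs (Set.mem_iUnion.2 ⟨j, hc⟩)
    obtain ⟨i0, hi0, hne⟩ := hxnot
    rcases le_or_gt i0 l with hil | hil
    · exact hne (by rw [← hzmatch i0 hil]; exact hj.1 i0 hi0)
    · have : z.1 (l + 1) = some (ws j (l + 1)) := hj.1 (l + 1) (by omega)
      rw [hza] at this
      exact haF (Finset.mem_image.2 ⟨j, Finset.mem_univ j, (Option.some.inj this).symm⟩)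

/-- Density at the empty sequence: a basic set containing `Ø` meets any infinite
shift-invariant `Y`. -/
lemma basic_meets_of_infinite {Y : Set (SigmaZ A)} (hinf : Y.Infinite)
    (hYinv : ∀ d : ℤ, ∀ y ∈ Y, shiftBy d y ∈ Y)
    {s : Set (SigmaZ A)} (hs : s ∈ basicSets A) (hxs : emptySeq A ∈ s) :
    (s ∩ Y).Nonempty := by
  rcases hs with ⟨k, w, F, rfl⟩ | ⟨n, ks, ws, rfl⟩
  · exact absurd (hxs.1 k le_rfl) (by simp)
  · obtain ⟨y, hyY, hyn⟩ := Set.not_subset.1 (not_subset_cylinders Y hinf hYinv ks ws)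
    exact ⟨y, hyn, hyY⟩

end SigmaZ
namespace SigmaZ

variable {A : Type u}

lemma XFinf_inv (Fw : Set (List A)) (Fl : Set (ℕ → A)) :
    ∀ d : ℤ, ∀ y ∈ XFinf Fw Fl, shiftBy d y ∈ XFinf Fw Fl :=
  fun d _ hy => shiftBy_mem_XFinf d hy

/-- The infinite elements of `XF` are exactly `XFinf`. -/
lemma XF_infinite_elems (Fw : Set (List A)) (Fl : Set (ℕ → A)) :
    {x ∈ XF Fw Fl | ∀ i, x.1 i ≠ none} = XFinf Fw Fl := by
  ext x
  constructor
  · rintro ⟨hx, hinfx⟩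
    rcases hx with h | h
    · exact h
    · by_cases hY : (XFinf Fw Fl).Infinite
      · rw [if_pos hY] at h
        rcases h with h | ⟨l, _, hl1, _⟩
        · rw [Set.mem_singleton_iff] at h
          exact absurd (h ▸ rfl : x.1 0 = none) (hinfx 0)
        · exact absurd hl1 (hinfx (l + 1))
      · rw [if_neg hY] at h
        exact h.elim
  · intro h
    exact ⟨Or.inl h, h.1⟩

lemma isClosed_XF [Nonempty A] (Fw : Set (List A)) (Fl : Set (ℕ → A)) :
    IsClosed (XF Fw Fl) := by
  classical
  apply isClosed_of_basic
  intro x hx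
  set Y := XFinf Fw Fl with hYdef
  have hYinv := XFinf_inv Fw Fl
  rcases trichotomy x with rfl | hinf | ⟨l, hl, hl1⟩
  · -- x = Ø : then Y is finite
    have hni : ¬ Y.Infinite := by
      intro h
      exact hx (Or.inr (by rw [if_pos h]; exact Or.inl rfl))
    obtain ⟨n, f, hf⟩ := (Set.not_infinite.1 hni).fin_embedding
    refine ⟨(⋃ j : Fin n, cyl 0 (letters (f j)) ∅)ᶜ, Or.inr ⟨n, _, _, rfl⟩, ?_, ?_⟩
    · intro hmem
      obtain ⟨j, hj⟩ := Set.mem_iUnion.1 hmem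
      exact absurd (hj.1 0 le_rfl) (by simp)
    · rw [Set.eq_empty_iff_forall_notMem]
      rintro z ⟨hzs, hzXF⟩
      have hzY : z ∈ Y := by
        rcases hzXF with h | h
        · exact h
        · rw [if_neg hni] at h
          exact h.elim
      have : z ∈ Set.range f := hf ▸ hzY
      obtain ⟨j, rfl⟩ := this
      exact hzs (Set.mem_iUnion.2 ⟨j, fun i _ => letters_spec (hzY.1 i), by simp⟩)
  · -- x infinite but not in Y
    have hxY : x ∉ Y := fun h => hx (Or.inl h)
    have hviol : ¬((∀ w ∈ Fw, ¬ OccursWord w x) ∧ ∀ u ∈ Fl, ¬ OccursLinf u x) :=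
      fun h => hxY ⟨hinf, h.1, h.2⟩
    rw [not_and_or] at hviol
    push_neg at hviol
    rcases hviol with ⟨v, hv, hocc⟩ | ⟨u, hu, hocc⟩
    · -- forbidden finite word occurs
      obtain ⟨kk, hkk⟩ := hocc
      refine ⟨cyl (kk + v.length) (letters x) ∅, Or.inl ⟨_, _, _, rfl⟩,
        ⟨fun i _ => letters_spec (hinf i), by simp⟩, ?_⟩
      have hkey : ∀ y : SigmaZ A, (∀ i ≤ kk + v.length, y.1 i = x.1 i) → OccursWord v y := by
        intro y hmatch
        refine ⟨kk, fun n hn => ?_⟩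
        have hcast : (n : ℤ) < (v.length : ℤ) := by exact_mod_cast hn
        rw [hmatch (kk + n) (by omega)]
        exact hkk n hn
      rw [Set.eq_empty_iff_forall_notMem]
      rintro z ⟨hzs, hzXF⟩
      have hzmatch : ∀ i ≤ kk + v.length, z.1 i = x.1 i := fun i hi => by
        rw [hzs.1 i hi, ← letters_spec (hinf i)]
      rcases hzXF with hzY | hzfin
      · exact hzY.2.1 v hv (hkey z hzmatch)
      · by_cases hYinf : Y.Infinite
        · rw [if_pos hYinf] at hzfin
          rcases hzfin with hzE | ⟨lz, hlz, hlz1, hfolz⟩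
          · rw [Set.mem_singleton_iff] at hzE
            exact absurd (hzE ▸ hzs.1 (kk + v.length) le_rfl) (by simp)
          · have hKlz : kk + v.length ≤ lz :=
              le_of_ne_none (by rw [hzs.1 _ le_rfl]; simp) hlz1
            obtain ⟨a, ha⟩ := hfolz.nonempty
            obtain ⟨y, hyY, hymatch, _⟩ := follower_witness hYinv ha
            refine hyY.2.1 v hv (hkey y fun i hi => ?_)
            rw [hymatch i (le_trans hi hKlz), hzmatch i hi]
        · rw [if_neg hYinf] at hzfin
          exact hzfin.elim
    · -- forbidden left-infinite word occurs
      obtain ⟨kk, hkk⟩ := hocc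
      refine ⟨cyl kk (letters x) ∅, Or.inl ⟨_, _, _, rfl⟩,
        ⟨fun i _ => letters_spec (hinf i), by simp⟩, ?_⟩
      have hkey : ∀ y : SigmaZ A, (∀ i ≤ kk, y.1 i = x.1 i) → OccursLinf u y := by
        intro y hmatch
        refine ⟨kk, fun n => ?_⟩
        rw [hmatch (kk - n) (by omega)]
        exact hkk n
      rw [Set.eq_empty_iff_forall_notMem]
      rintro z ⟨hzs, hzXF⟩
      have hzmatch : ∀ i ≤ kk, z.1 i = x.1 i := fun i hi => by
        rw [hzs.1 i hi, ← letters_spec (hinf i)]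
      rcases hzXF with hzY | hzfin
      · exact hzY.2.2 u hu (hkey z hzmatch)
      · by_cases hYinf : Y.Infinite
        · rw [if_pos hYinf] at hzfin
          rcases hzfin with hzE | ⟨lz, hlz, hlz1, hfolz⟩
          · rw [Set.mem_singleton_iff] at hzE
            exact absurd (hzE ▸ hzs.1 kk le_rfl) (by simp)
          · have hKlz : kk ≤ lz := le_of_ne_none (by rw [hzs.1 _ le_rfl]; simp) hlz1
            obtain ⟨a, ha⟩ := hfolz.nonempty
            obtain ⟨y, hyY, hymatch, _⟩ := follower_witness hYinv ha
            refine hyY.2.2 u hu (hkey y fun i hi => ?_)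
            rw [hymatch i (le_trans hi hKlz), hzmatch i hi]
        · rw [if_neg hYinf] at hzfin
          exact hzfin.elim
  · -- x finite with last letter at l
    by_cases hYinf : Y.Infinite
    · have hfol : (followerLetters Y x l).Finite := by
        rw [← Set.not_infinite]
        intro h
        exact hx (Or.inr (by rw [if_pos hYinf]; exact Or.inr ⟨l, hl, hl1, h⟩))
      refine ⟨cyl l (letters x) hfol.toFinset, Or.inl ⟨_, _, _, rfl⟩,
        ⟨fun i hi => letters_spec (ne_none_of_le hl hi), fun a _ => by rw [hl1]; simp⟩, ?_⟩
      rw [Set.eq_empty_iff_forall_notMem]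
      rintro z ⟨hzs, hzXF⟩
      have hzmatch : ∀ i ≤ l, z.1 i = x.1 i := fun i hi => by
        rw [hzs.1 i hi, ← letters_spec (ne_none_of_le hl hi)]
      rcases hzXF with hzY | hzfin
      · obtain ⟨a, haz⟩ := Option.ne_none_iff_exists'.1 (hzY.1 (l + 1))
        have haG : a ∈ followerLetters Y x l :=
          ⟨z, hzY, l + 1, haz, fun i hi => hzmatch (l + 1 + i) (by omega)⟩
        exact hzs.2 a (hfol.mem_toFinset.2 haG) haz
      · rw [if_pos hYinf] at hzfin
        rcases hzfin with hzE | ⟨lz, hlz, hlz1, hfolz⟩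
        · rw [Set.mem_singleton_iff] at hzE
          exact absurd (hzE ▸ hzs.1 l le_rfl) (by simp)
        · have hlz2 : l ≤ lz := le_of_ne_none (by rw [hzs.1 l le_rfl]; simp) hlz1
          rcases eq_or_lt_of_le hlz2 with rfl | hlt
          · have he : followerLetters Y z l = followerLetters Y x l :=
              followerLetters_congr (fun i hi => hzmatch (l + 1 + i) (by omega))
            rw [he] at hfolz
            exact hfolz hfol
          · obtain ⟨b, hb⟩ := Option.ne_none_iff_exists'.1 (ne_none_of_le hlz (by omega : l + 1 ≤ lz))
            obtain ⟨a', ha'⟩ := hfolz.nonempty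
            obtain ⟨y, hyY, hymatch, _⟩ := follower_witness hYinv ha'
            have hbF : b ∈ followerLetters Y x l := by
              refine ⟨y, hyY, l + 1, by rw [hymatch (l + 1) (by omega), hb],
                fun i hi => ?_⟩
              rw [hymatch (l + 1 + i) (by omega)]
              exact hzmatch (l + 1 + i) (by omega)
            exact hzs.2 b (hfol.mem_toFinset.2 hbF) hb
    · -- Y finite : XF = Y contains no finite sequence
      have hG0 : {a : A | ∃ y ∈ Y, y.1 (l + 1) = some a}.Finite := by
        have himg : ((fun y : SigmaZ A => (y.1 (l + 1)).getD (Classical.arbitrary A)) '' Y).Finite :=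
          (Set.not_infinite.1 hYinf).image _
        refine himg.subset ?_
        rintro a ⟨y, hy, hay⟩
        exact ⟨y, hy, by simp [hay]⟩
      refine ⟨cyl l (letters x) hG0.toFinset, Or.inl ⟨_, _, _, rfl⟩,
        ⟨fun i hi => letters_spec (ne_none_of_le hl hi), fun a _ => by rw [hl1]; simp⟩, ?_⟩
      rw [Set.eq_empty_iff_forall_notMem]
      rintro z ⟨hzs, hzXF⟩
      have hzY : z ∈ Y := by
        rcases hzXF with h | h
        · exact h
        · rw [if_neg hYinf] at h
          exact h.elim
      obtain ⟨a, haz⟩ := Option.ne_none_iff_exists'.1 (hzY.1 (l + 1))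
      exact hzs.2 a (hG0.mem_toFinset.2 ⟨z, hzY, haz⟩) haz

lemma shift_XF (Fw : Set (List A)) (Fl : Set (ℕ → A)) :
    shift '' XF Fw Fl = XF Fw Fl := by
  set Y := XFinf Fw Fl with hYdef
  have hfwd : ∀ x ∈ XF Fw Fl, shift x ∈ XF Fw Fl := by
    intro x hx
    rcases hx with hxY | hxfin
    · exact Or.inl (by rw [shift_eq_shiftBy]; exact shiftBy_mem_XFinf 1 hxY)
    · by_cases hYinf : Y.Infinite
      · rw [if_pos hYinf] at hxfin
        refine Or.inr ?_
        rw [if_pos hYinf]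
        rcases hxfin with hxE | ⟨l, hl, hl1, hfol⟩
        · rw [Set.mem_singleton_iff] at hxE
          exact Or.inl (by rw [hxE, shift_emptySeq]; rfl)
        · refine Or.inr ⟨l - 1, ?_, ?_, ?_⟩
          · show x.1 (l - 1 + 1) ≠ none
            rwa [show l - 1 + 1 = l by ring]
          · show x.1 (l - 1 + 1 + 1) = none
            rwa [show l - 1 + 1 + 1 = l + 1 by ring]
          · have he : followerLetters Y (shift x) (l - 1) = followerLetters Y x l := by
              refine followerLetters_congr (fun i hi => ?_)
              show x.1 (l - 1 + 1 + i + 1) = x.1 (l + 1 + i)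
              congr 1
              ring
            rwa [he]
      · rw [if_neg hYinf] at hxfin
        exact hxfin.elim
  have hbwd : ∀ x ∈ XF Fw Fl, shiftBy (-1) x ∈ XF Fw Fl := by
    intro x hx
    rcases hx with hxY | hxfin
    · exact Or.inl (shiftBy_mem_XFinf (-1) hxY)
    · by_cases hYinf : Y.Infinite
      · rw [if_pos hYinf] at hxfin
        refine Or.inr ?_
        rw [if_pos hYinf]
        rcases hxfin with hxE | ⟨l, hl, hl1, hfol⟩
        · rw [Set.mem_singleton_iff] at hxE
          refine Or.inl ?_
          rw [hxE]
          show shiftBy (-1) (emptySeq A) ∈ {emptySeq A}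
          rw [Set.mem_singleton_iff]
          apply Subtype.ext
          rfl
        · refine Or.inr ⟨l + 1, ?_, ?_, ?_⟩
          · show x.1 (l + 1 + -1) ≠ none
            rwa [show l + 1 + -1 = l by ring]
          · show x.1 (l + 1 + 1 + -1) = none
            rwa [show l + 1 + 1 + -1 = l + 1 by ring]
          · have he : followerLetters Y (shiftBy (-1) x) (l + 1) = followerLetters Y x l := by
              refine followerLetters_congr (fun i hi => ?_)
              show x.1 (l + 1 + 1 + i + -1) = x.1 (l + 1 + i)
              congr 1
              ring
            rwa [he]
      · rw [if_neg hYinf] at hxfin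
        exact hxfin.elim
  ext z
  constructor
  · rintro ⟨y, hy, rfl⟩
    exact hfwd y hy
  · intro hz
    exact ⟨shiftBy (-1) z, hbwd z hz, shift_shiftBy_neg_one z⟩

lemma dense_XF (Fw : Set (List A)) (Fl : Set (ℕ → A)) :
    XF Fw Fl ⊆ closure {x ∈ XF Fw Fl | ∀ i, x.1 i ≠ none} := by
  rw [XF_infinite_elems]
  set Y := XFinf Fw Fl with hYdef
  have hYinv := XFinf_inv Fw Fl
  intro x hx
  rw [mem_closure_iff_basic]
  intro s hs hxs
  rcases hx with hxY | hxfin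
  · exact ⟨x, hxs, hxY⟩
  · by_cases hYinf : Y.Infinite
    · rw [if_pos hYinf] at hxfin
      rcases hxfin with hxE | ⟨l, hl, hl1, hfol⟩
      · rw [Set.mem_singleton_iff] at hxE
        subst hxE
        exact basic_meets_of_infinite hYinf hYinv hs hxs
      · exact basic_meets_of_followers hYinv hl hl1 hfol hs hxs
    · rw [if_neg hYinf] at hxfin
      exact hxfin.elim

theorem part1 [Nonempty A] (Fw : Set (List A)) (Fl : Set (ℕ → A)) :
    IsShiftSpace (XF Fw Fl) :=
  ⟨isClosed_XF Fw Fl, shift_XF Fw Fl, dense_XF Fw Fl⟩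

end SigmaZ
namespace SigmaZ

variable {A : Type u}

theorem part2 [Nonempty A] (Lam : Set (SigmaZ A)) (hLam : IsShiftSpace Lam) :
    ∃ (Fw : Set (List A)) (Fl : Set (ℕ → A)), [] ∉ Fw ∧ Lam = XF Fw Fl := by
  classical
  obtain ⟨hclosed, hshift, hdense⟩ := hLam
  set LInf := {x ∈ Lam | ∀ i, x.1 i ≠ none} with hLInf
  have hLinv : ∀ d : ℤ, ∀ y ∈ Lam, shiftBy d y ∈ Lam := shiftBy_mem Lam hshift
  have hLIinv : ∀ d : ℤ, ∀ y ∈ LInf, shiftBy d y ∈ LInf :=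
    fun d y hy => ⟨hLinv d y hy.1, fun i => hy.2 (i + d)⟩
  set Fw : Set (List A) := {w | w ≠ [] ∧ ∀ x ∈ LInf, ¬ OccursWord w x} with hFw
  set Fl : Set (ℕ → A) := {u | ∀ x ∈ LInf, ¬ OccursLinf u x} with hFl
  refine ⟨Fw, Fl, fun h => h.1 rfl, ?_⟩
  -- Step A : XFinf Fw Fl = LInf
  have hXf : XFinf Fw Fl = LInf := by
    apply Set.Subset.antisymm
    · intro x hx
      have hxinf := hx.1
      have hmatch_exists : ∀ K : ℤ, ∃ z ∈ LInf, ∀ i ≤ K, z.1 i = x.1 i := by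
        intro K
        set u : ℕ → A := fun n => letters x (K - n) with hu
        have hocc : OccursLinf u x := ⟨K, fun n => letters_spec (hxinf _)⟩
        have hunot : u ∉ Fl := fun hu' => hx.2.2 u hu' hocc
        rw [hFl, Set.mem_setOf_eq] at hunot
        push_neg at hunot
        obtain ⟨z, hz, m, hm⟩ := hunot
        refine ⟨shiftBy (m - K) z, hLIinv _ z hz, fun i hi => ?_⟩
        have hn : ((K - i).toNat : ℤ) = K - i := Int.toNat_of_nonneg (by omega)
        have := hm (K - i).toNat
        rw [hn] at this
        rw [shiftBy_apply, show i + (m - K) = m - (K - i) by ring, this, hu]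
        simp only []
        rw [hn, show K - (K - i) = i by ring]
        exact (letters_spec (hxinf i)).symm
      have hxcl : x ∈ closure Lam := by
        rw [mem_closure_iff_basic]
        intro s hs hxs
        rcases hs with ⟨k, w, F, rfl⟩ | ⟨n, ks, ws, rfl⟩
        · obtain ⟨z, hz, hzm⟩ := hmatch_exists (k + 1)
          refine ⟨z, ⟨fun i hi => ?_, fun a ha => ?_⟩, hz.1⟩
          · rw [hzm i (by omega)]
            exact hxs.1 i hi
          · rw [hzm (k + 1) le_rfl]
            exact hxs.2 a ha
        · obtain ⟨K, _, hK⟩ := exists_int_bound ks 0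
          obtain ⟨z, hz, hzm⟩ := hmatch_exists K
          refine ⟨z, fun hmem => ?_, hz.1⟩
          obtain ⟨j, hj⟩ := Set.mem_iUnion.1 hmem
          have hxnot : ∃ i ≤ ks j, x.1 i ≠ some (ws j i) := by
            rw [← not_mem_cyl_empty]
            exact fun hc => hxs (Set.mem_iUnion.2 ⟨j, hc⟩)
          obtain ⟨i0, hi0, hne⟩ := hxnot
          exact hne (by rw [← hzm i0 (le_trans hi0 (hK j))]; exact hj.1 i0 hi0)
      rw [hclosed.closure_eq] at hxcl
      exact ⟨hxcl, hxinf⟩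
    · intro x hx
      exact ⟨hx.2, fun w hw hocc => hw.2 x hx hocc, fun u hu hocc => hu x hx hocc⟩
  -- Step B : Lam = XF Fw Fl
  apply Set.Subset.antisymm
  · -- Lam ⊆ XF
    intro x hxL
    rcases trichotomy x with rfl | hinf | ⟨l, hl, hl1⟩
    · -- Ø ∈ Lam : LInf is infinite
      have hLIinf : LInf.Infinite := by
        by_contra hni
        rw [Set.not_infinite] at hni
        obtain ⟨n, f, hf⟩ := hni.fin_embedding
        have hxcl := hdense hxL
        rw [mem_closure_iff_basic] at hxcl
        obtain ⟨y, hys, hyI⟩ := hxcl (⋃ j : Fin n, cyl 0 (letters (f j)) ∅)ᶜ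
          (Or.inr ⟨n, _, _, rfl⟩) (by
            intro hmem
            obtain ⟨j, hj⟩ := Set.mem_iUnion.1 hmem
            exact absurd (hj.1 0 le_rfl) (by simp))
        have : y ∈ Set.range f := hf ▸ hyI
        obtain ⟨j, rfl⟩ := this
        exact hys (Set.mem_iUnion.2 ⟨j, fun i _ => letters_spec (hyI.2 i), by simp⟩)
      have hYinf : (XFinf Fw Fl).Infinite := by rw [hXf]; exact hLIinf
      exact Or.inr (by rw [if_pos hYinf]; exact Or.inl rfl)
    · exact Or.inl (by rw [hXf]; exact ⟨hxL, hinf⟩)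
    · -- finite sequence in Lam : followers are infinite
      have hfol : (followerLetters LInf x l).Infinite := by
        by_contra hni
        rw [Set.not_infinite] at hni
        have hxcl := hdense hxL
        rw [mem_closure_iff_basic] at hxcl
        obtain ⟨y, hys, hyI⟩ := hxcl (cyl l (letters x) hni.toFinset)
          (Or.inl ⟨_, _, _, rfl⟩)
          ⟨fun i hi => letters_spec (ne_none_of_le hl hi), fun a _ => by rw [hl1]; simp⟩
        obtain ⟨a, ha⟩ := Option.ne_none_iff_exists'.1 (hyI.2 (l + 1))
        have hymatch : ∀ i ≤ l, y.1 i = x.1 i := fun i hi => by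
          rw [hys.1 i hi, ← letters_spec (ne_none_of_le hl hi)]
        have haf : a ∈ followerLetters LInf x l :=
          ⟨y, hyI, l + 1, ha, fun i hi => hymatch (l + 1 + i) (by omega)⟩
        exact hys.2 a (hni.mem_toFinset.2 haf) ha
      have hLIinf : LInf.Infinite := by
        refine Set.Infinite.of_image (fun y : SigmaZ A => (y.1 (l + 1)).getD (Classical.arbitrary A)) ?_
        refine Set.Infinite.mono ?_ hfol
        intro a ha
        obtain ⟨z, hz, _, hza⟩ := follower_witness hLIinv ha
        exact ⟨z, hz, by simp [hza]⟩
      have hYinf : (XFinf Fw Fl).Infinite := by rw [hXf]; exact hLIinf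
      refine Or.inr ?_
      rw [if_pos hYinf]
      exact Or.inr ⟨l, hl, hl1, by rw [hXf]; exact hfol⟩
  · -- XF ⊆ Lam
    intro x hx
    rcases hx with hxY | hxfin
    · rw [hXf] at hxY
      exact hxY.1
    · by_cases hYinf : (XFinf Fw Fl).Infinite
      · rw [if_pos hYinf] at hxfin
        have hLIinf : LInf.Infinite := by rwa [hXf] at hYinf
        rcases hxfin with hxE | ⟨l, hl, hl1, hfol⟩
        · rw [Set.mem_singleton_iff] at hxE
          subst hxE
          have : emptySeq A ∈ closure Lam := by
            rw [mem_closure_iff_basic]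
            intro s hs hxs
            obtain ⟨y, hy1, hy2⟩ := basic_meets_of_infinite hLIinf hLIinv hs hxs
            exact ⟨y, hy1, hy2.1⟩
          rwa [hclosed.closure_eq] at this
        · rw [hXf] at hfol
          have : x ∈ closure Lam := by
            rw [mem_closure_iff_basic]
            intro s hs hxs
            obtain ⟨y, hy1, hy2⟩ := basic_meets_of_followers hLIinv hl hl1 hfol hs hxs
            exact ⟨y, hy1, hy2.1⟩
          rwa [hclosed.closure_eq] at this
      · rw [if_neg hYinf] at hxfin
        exact hxfin.elim

end SigmaZ

namespace SigmaZ

/-- Every set of forbidden words determines a shift space `X_F`, and every shift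
space arises this way. -/
theorem stmt11 {A : Type u} [Countable A] [Infinite A] :
    (∀ (Fw : Set (List A)) (Fl : Set (ℕ → A)), [] ∉ Fw → IsShiftSpace (XF Fw Fl)) ∧
    (∀ Lam : Set (SigmaZ A), IsShiftSpace Lam →
      ∃ (Fw : Set (List A)) (Fl : Set (ℕ → A)), [] ∉ Fw ∧ Lam = XF Fw Fl) := by
  have : Nonempty A := inferInstance
  exact ⟨fun Fw Fl _ => part1 Fw Fl, fun Lam hLam => part2 Lam hLam⟩

end SigmaZ
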